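/- With R1, R2, Θ independent, R1 ~ μ_{λ1,c1}, R2 ~ μ_{λ2,c2}, Θ uniform on (0, π), and ρ = √(R1² + R2² − 2·R1·R2·cos Θ), the joint probability P(ρ < r, R1 = c1·t, R2 < c2·t) equals 0 for 0 < r ≤ (c1 − c2)·t, and equals (λ2·e^{−(λ1+λ2)t}/(π·c2)) · ∫_{c1t−r}^{c2t} arccos((ξ² + (c1t)² − r²)/(2·c1t·ξ)) · ξ·(c2²t² − ξ²)^{−1/2} · exp((λ2/c2)·√(c2²t² − ξ²)) dξ for (c1 − c2)·t < r ≤ c1·t. -/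

import Mathlib

open MeasureTheory ProbabilityTheory

/-- Density of the absolutely continuous part of the law of the distance from
the origin of a planar Markov random flight with speed `c` and rate `lam` at time `t`. -/
noncomputable def fac (t lam c z : ℝ) : ℝ :=
  if 0 < z ∧ z < c * t then
    (lam / c) * z / Real.sqrt (c ^ 2 * t ^ 2 - z ^ 2) *
      Real.exp (-(lam * t) + (lam / c) * Real.sqrt (c ^ 2 * t ^ 2 - z ^ 2))
  else 0

/-- The law of the distance from the origin of a planar Markov random flight:
singular part `e^{-λt}·δ_{ct}` plus absolutely continuous part with density `fac`. -/
noncomputable def flightLaw (t lam c : ℝ) : Measure ℝ :=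
  ENNReal.ofReal (Real.exp (-(lam * t))) • Measure.dirac (c * t) +
    volume.withDensity fun z => ENNReal.ofReal (fac t lam c z)

/-- The uniform probability measure on a set `s ⊆ ℝ`. -/
noncomputable def uniformMeasure (s : Set ℝ) : Measure ℝ :=
  (volume s)⁻¹ • volume.restrict s

/-- The Euclidean distance between the two flights, expressed through the radii
`R1, R2` and the angle `Θ` via the law of cosines. -/
noncomputable def rho {Ω : Type*} (R1 R2 Θ : Ω → ℝ) (ω : Ω) : ℝ :=
  Real.sqrt (R1 ω ^ 2 + R2 ω ^ 2 - 2 * R1 ω * R2 ω * Real.cos (Θ ω))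


/-! Only the atom of `R1` at `a = c1 t` contributes, with mass `e^{-λ1 t}`. Given `R1 = a`
and `R2 = y ∈ (0, c2 t)`, the law of cosines turns `ρ < r` into
`cos Θ > (y² + a² - r²) / (2 a y)`, an event of probability `arccos(·) / π`. It is empty as
soon as `y ≤ a - r`, which for `r ≤ (c1 - c2) t` is every `y < c2 t`; otherwise integrating
against the density of `R2` over `(a - r, c2 t)` gives the formula. -/

open Set Real

lemma lt_arccos_iff_lt_cos {θ v : ℝ} (hθ : θ ∈ Ico 0 π) : θ < arccos v ↔ v < cos θ := by
  rw [arccos, lt_sub_comm, arcsin_lt_iff_lt_sin' ⟨by linarith [hθ.2], by linarith [hθ.1]⟩,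
    sin_pi_div_two_sub]

lemma setOf_lt_cos_inter_Ioo_pi (v : ℝ) : {θ | v < cos θ} ∩ Ioo 0 π = Ioo 0 (arccos v) := by
  ext θ
  constructor
  · rintro ⟨hcos, hpos, hπ⟩
    exact ⟨hpos, (lt_arccos_iff_lt_cos ⟨hpos.le, hπ⟩).2 hcos⟩
  · rintro ⟨hpos, hlt⟩
    have hπ : θ < π := hlt.trans_le (arccos_le_pi v)
    exact ⟨(lt_arccos_iff_lt_cos ⟨hpos.le, hπ⟩).1 hlt, hpos, hπ⟩

lemma uniformMeasure_Ioo_pi_setOf_lt_cos (v : ℝ) :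
    uniformMeasure (Ioo 0 π) {θ | v < cos θ} = ENNReal.ofReal (arccos v / π) := by
  rw [uniformMeasure, Measure.smul_apply, Measure.restrict_apply
      (measurableSet_lt measurable_const continuous_cos.measurable),
    setOf_lt_cos_inter_Ioo_pi, volume_Ioo, volume_Ioo, sub_zero, sub_zero, smul_eq_mul,
    ENNReal.ofReal_div_of_pos pi_pos, ENNReal.div_eq_inv_mul]

lemma sqrt_lawOfCosines_lt_iff {a y r θ : ℝ} (ha : 0 < a) (hy : 0 < y) (hr : 0 < r) :
    √(a ^ 2 + y ^ 2 - 2 * a * y * cos θ) < r ↔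
      (y ^ 2 + a ^ 2 - r ^ 2) / (2 * a * y) < cos θ := by
  rw [sqrt_lt' hr, div_lt_iff₀ (by positivity)]
  constructor <;> intro h <;> linarith

lemma arccos_lawOfCosines_eq_zero {a y r : ℝ} (hr : 0 ≤ r) (hy : 0 < y) (hyr : y ≤ a - r) :
    arccos ((y ^ 2 + a ^ 2 - r ^ 2) / (2 * a * y)) = 0 := by
  rw [arccos_eq_zero, le_div_iff₀ (by nlinarith)]
  nlinarith [pow_le_pow_left₀ hr (le_sub_comm.1 hyr) 2]

lemma ProbabilityTheory.iIndepFun.map_prodMk_eq_prod_map {Ω β : Type*} [MeasurableSpace Ω]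
    [MeasurableSpace β] {μ : Measure Ω} [IsFiniteMeasure μ] {X Y Z : Ω → β}
    (hX : Measurable X) (hY : Measurable Y) (hZ : Measurable Z) (h : iIndepFun ![X, Y, Z] μ) :
    μ.map (fun ω => (X ω, Y ω, Z ω)) = (μ.map X).prod ((μ.map Y).prod (μ.map Z)) := by
  have hmeas : ∀ i, Measurable (![X, Y, Z] i) := by
    intro i; fin_cases i <;> assumption
  have hYZ : IndepFun Y Z μ := by simpa using h.indepFun (show (1 : Fin 3) ≠ 2 by decide)
  have hXYZ : IndepFun X (fun ω => (Y ω, Z ω)) μ := by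
    simpa using (h.indepFun_prodMk hmeas 1 2 0 (by decide) (by decide)).symm
  rw [(indepFun_iff_map_prod_eq_prod_map_map hX.aemeasurable
      (hY.prodMk hZ).aemeasurable).1 hXYZ,
    (indepFun_iff_map_prod_eq_prod_map_map hY.aemeasurable hZ.aemeasurable).1 hYZ]

section FlightLaw

variable {t lam c : ℝ}

lemma fac_nonneg (hl : 0 ≤ lam) (hc : 0 ≤ c) (z : ℝ) : 0 ≤ fac t lam c z := by
  rw [fac]
  split_ifs with h
  · have := h.1
    positivity
  · exact le_rfl

lemma fac_eq_zero_of_notMem {z : ℝ} (hz : z ∉ Ioo 0 (c * t)) : fac t lam c z = 0 :=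
  if_neg hz

lemma measurable_fac (t lam c : ℝ) : Measurable (fac t lam c) :=
  Measurable.ite (measurableSet_Ioo (a := 0) (b := c * t)) (by fun_prop) (by fun_prop)

instance (t lam c : ℝ) : SFinite (flightLaw t lam c) := by
  unfold flightLaw; infer_instance

instance (s : Set ℝ) : SFinite (uniformMeasure s) := by
  unfold uniformMeasure; infer_instance

lemma flightLaw_singleton (t lam c : ℝ) :
    flightLaw t lam c {c * t} = ENNReal.ofReal (exp (-(lam * t))) := by
  rw [flightLaw, Measure.add_apply, Measure.smul_apply,
    Measure.dirac_apply_of_mem (mem_singleton _),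
    withDensity_absolutelyContinuous _ _ volume_singleton, smul_eq_mul, mul_one, add_zero]

lemma flightLaw_restrict_Iio (t lam c : ℝ) :
    (flightLaw t lam c).restrict (Iio (c * t)) =
      (volume.restrict (Ioo 0 (c * t))).withDensity fun z => ENNReal.ofReal (fac t lam c z) := by
  have hself {s : Set ℝ} (hs : Ioo 0 (c * t) ⊆ s) :
      s.indicator (fun z => ENNReal.ofReal (fac t lam c z)) =
        fun z => ENNReal.ofReal (fac t lam c z) :=
    indicator_eq_self.2 fun z hz =>
      hs <| by_contra fun h => hz (by simp [fac_eq_zero_of_notMem h])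
  rw [flightLaw, Measure.restrict_add, Measure.restrict_smul, restrict_dirac' measurableSet_Iio,
    if_neg self_notMem_Iio, smul_zero, zero_add, restrict_withDensity measurableSet_Iio,
    ← withDensity_indicator measurableSet_Iio, hself Ioo_subset_Iio_self,
    ← withDensity_indicator measurableSet_Ioo, hself subset_rfl]

lemma integrable_fac (hl : 0 ≤ lam) (hc : 0 ≤ c) [IsFiniteMeasure (flightLaw t lam c)] :
    Integrable (fac t lam c) := by
  have hfin : ∫⁻ z, ENNReal.ofReal (fac t lam c z) ≠ ⊤ := by
    rw [← setLIntegral_univ, ← withDensity_apply _ MeasurableSet.univ]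
    refine ne_top_of_le_ne_top (measure_ne_top (flightLaw t lam c) univ) ?_
    exact Measure.le_add_left le_rfl univ
  simpa [ENNReal.toReal_ofReal (fac_nonneg hl hc _)] using
    integrable_toReal_of_lintegral_ne_top (measurable_fac t lam c).ennreal_ofReal.aemeasurable hfin

end FlightLaw

lemma flightLaw_prod_uniformMeasure_apply {t lam c a r : ℝ} (hl : 0 ≤ lam) (hc : 0 ≤ c)
    (ha : 0 < a) (hr : 0 < r) :
    (flightLaw t lam c).prod (uniformMeasure (Ioo 0 π))
        {q | √(a ^ 2 + q.1 ^ 2 - 2 * a * q.1 * cos q.2) < r ∧ q.1 < c * t} =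
      ∫⁻ y in Ioo 0 (c * t),
        ENNReal.ofReal (fac t lam c y * (arccos ((y ^ 2 + a ^ 2 - r ^ 2) / (2 * a * y)) / π)) := by
  set S := {q : ℝ × ℝ | √(a ^ 2 + q.1 ^ 2 - 2 * a * q.1 * cos q.2) < r ∧ q.1 < c * t}
  have hS : MeasurableSet S := by
    have hdist : Measurable fun q : ℝ × ℝ => √(a ^ 2 + q.1 ^ 2 - 2 * a * q.1 * cos q.2) := by
      fun_prop
    exact (measurableSet_lt hdist measurable_const).inter
      (measurableSet_lt measurable_fst measurable_const)
  have hsub : S ⊆ Iio (c * t) ×ˢ univ := fun q hq => ⟨hq.2, mem_univ _⟩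
  have hsection {y : ℝ} (hy : y ∈ Ioo 0 (c * t)) :
      Prod.mk y ⁻¹' S = {θ | (y ^ 2 + a ^ 2 - r ^ 2) / (2 * a * y) < cos θ} := by
    ext θ
    simp [S, hy.2, sqrt_lawOfCosines_lt_iff ha hy.1 hr]
  calc (flightLaw t lam c).prod (uniformMeasure (Ioo 0 π)) S
      = ((flightLaw t lam c).restrict (Iio (c * t))).prod (uniformMeasure (Ioo 0 π)) S := by
        rw [Measure.restrict_prod_eq_prod_univ, Measure.restrict_eq_self _ hsub]
    _ = ∫⁻ y in Ioo 0 (c * t), ENNReal.ofReal (fac t lam c y) *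
          uniformMeasure (Ioo 0 π) (Prod.mk y ⁻¹' S) := by
        rw [Measure.prod_apply hS, flightLaw_restrict_Iio,
          lintegral_withDensity_eq_lintegral_mul _ (measurable_fac t lam c).ennreal_ofReal
            (measurable_measure_prodMk_left hS)]
        rfl
    _ = _ := by
        refine setLIntegral_congr_fun measurableSet_Ioo fun y hy => ?_
        rw [hsection hy, uniformMeasure_Ioo_pi_setOf_lt_cos,
          ENNReal.ofReal_mul (fac_nonneg hl hc y)]

lemma ofReal_setIntegral_fac_mul_arccos {t lam c : ℝ} (hl : 0 ≤ lam) (hc : 0 ≤ c)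
    [IsFiniteMeasure (flightLaw t lam c)] {v : ℝ → ℝ} (hv : Measurable v) (s : Set ℝ) :
    ENNReal.ofReal (∫ y in s, fac t lam c y * (arccos (v y) / π)) =
      ∫⁻ y in s, ENNReal.ofReal (fac t lam c y * (arccos (v y) / π)) := by
  have hbound (y : ℝ) : ‖arccos (v y) / π‖ ≤ 1 := by
    rw [norm_of_nonneg (div_nonneg (arccos_nonneg _) pi_pos.le)]
    exact div_le_one_of_le₀ (arccos_le_pi _) pi_pos.le
  refine ofReal_integral_eq_lintegral_ofReal ?_ (ae_of_all _ fun y => ?_)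
  · exact (integrable_fac hl hc).integrableOn.mul_bdd
      ((continuous_arccos.measurable.comp hv).div_const π).aestronglyMeasurable
      (ae_of_all _ hbound)
  · exact mul_nonneg (fac_nonneg hl hc y) (div_nonneg (arccos_nonneg _) pi_pos.le)

lemma flightLaw_prod_prod_apply {t l1 l2 c1 c2 r : ℝ} (hl2 : 0 ≤ l2) (hc2 : 0 ≤ c2)
    (ha : 0 < c1 * t) (hr : 0 < r) :
    (flightLaw t l1 c1).prod ((flightLaw t l2 c2).prod (uniformMeasure (Ioo 0 π)))
        {p | √(p.1 ^ 2 + p.2.1 ^ 2 - 2 * p.1 * p.2.1 * cos p.2.2) < r ∧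
          p.1 = c1 * t ∧ p.2.1 < c2 * t} =
      ENNReal.ofReal (exp (-(l1 * t))) * ∫⁻ y in Ioo 0 (c2 * t), ENNReal.ofReal
        (fac t l2 c2 y * (arccos ((y ^ 2 + (c1 * t) ^ 2 - r ^ 2) / (2 * (c1 * t) * y)) / π)) := by
  have hprod : {p : ℝ × ℝ × ℝ | √(p.1 ^ 2 + p.2.1 ^ 2 - 2 * p.1 * p.2.1 * cos p.2.2) < r
      ∧ p.1 = c1 * t ∧ p.2.1 < c2 * t} = {c1 * t} ×ˢ
      {q | √((c1 * t) ^ 2 + q.1 ^ 2 - 2 * (c1 * t) * q.1 * cos q.2) < r ∧ q.1 < c2 * t} := by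
    ext ⟨x, y, θ⟩
    simp only [mem_prod, mem_singleton_iff]
    constructor
    · rintro ⟨hdist, rfl, hy⟩
      exact ⟨rfl, hdist, hy⟩
    · rintro ⟨rfl, hdist, hy⟩
      exact ⟨hdist, rfl, hy⟩
  rw [hprod, Measure.prod_prod, flightLaw_singleton,
    flightLaw_prod_uniformMeasure_apply hl2 hc2 ha hr]

lemma setIntegral_fac_mul_arccos_eq {t lam c a r : ℝ} (hc : c ≠ 0) (hr : 0 ≤ r)
    (har : 0 ≤ a - r) (hart : a - r ≤ c * t) :
    ∫ y in Ioo 0 (c * t), fac t lam c y * (arccos ((y ^ 2 + a ^ 2 - r ^ 2) / (2 * a * y)) / π) =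
      lam * exp (-(lam * t)) / (π * c) *
        ∫ ξ in (a - r)..(c * t), arccos ((ξ ^ 2 + a ^ 2 - r ^ 2) / (2 * a * ξ)) *
          (ξ / √(c ^ 2 * t ^ 2 - ξ ^ 2)) * exp ((lam / c) * √(c ^ 2 * t ^ 2 - ξ ^ 2)) := by
  have hvanish : ∀ y ∈ Ioo 0 (c * t) \ Ioo (a - r) (c * t),
      fac t lam c y * (arccos ((y ^ 2 + a ^ 2 - r ^ 2) / (2 * a * y)) / π) = 0 := by
    rintro y ⟨hy, hy'⟩
    have hyr : y ≤ a - r := not_lt.1 fun h => hy' ⟨h, hy.2⟩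
    rw [arccos_lawOfCosines_eq_zero hr hy.1 hyr, zero_div, mul_zero]
  rw [setIntegral_eq_of_subset_of_forall_sdiff_eq_zero measurableSet_Ioo
      (Ioo_subset_Ioo_left har) hvanish, intervalIntegral.integral_of_le hart,
    integral_Ioc_eq_integral_Ioo, ← integral_const_mul]
  refine setIntegral_congr_fun measurableSet_Ioo fun y hy => ?_
  rw [fac, if_pos ⟨har.trans_lt hy.1, hy.2⟩, exp_add]
  field_simp

theorem joint_prob_second_switched_small_r_general {Ω : Type*} [MeasureSpace Ω] [IsProbabilityMeasure (ℙ : Measure Ω)]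
    (t l1 l2 c1 c2 : ℝ) (ht : 0 < t) (hl2 : 0 < l2)
    (hc2 : 0 < c2) (hc12 : c2 ≤ c1)
    (R1 R2 Θ : Ω → ℝ) (hmR1 : Measurable R1) (hmR2 : Measurable R2) (hmΘ : Measurable Θ)
    (hind : iIndepFun ![R1, R2, Θ] ℙ)
    (hR1 : Measure.map R1 ℙ = flightLaw t l1 c1)
    (hR2 : Measure.map R2 ℙ = flightLaw t l2 c2)
    (hΘ : Measure.map Θ ℙ = uniformMeasure (Set.Ioo 0 Real.pi))
    (r : ℝ) :
    (0 < r → r ≤ (c1 - c2) * t →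
      ℙ {ω | rho R1 R2 Θ ω < r ∧ R1 ω = c1 * t ∧ R2 ω < c2 * t} = 0) ∧
    ((c1 - c2) * t < r → r ≤ c1 * t →
      ℙ {ω | rho R1 R2 Θ ω < r ∧ R1 ω = c1 * t ∧ R2 ω < c2 * t}
        = ENNReal.ofReal (l2 * Real.exp (-((l1 + l2) * t)) / (Real.pi * c2) *
            (∫ ξ in (c1 * t - r)..(c2 * t),
              Real.arccos ((ξ ^ 2 + (c1 * t) ^ 2 - r ^ 2) / (2 * (c1 * t) * ξ)) *
                (ξ / Real.sqrt (c2 ^ 2 * t ^ 2 - ξ ^ 2)) *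
                Real.exp ((l2 / c2) * Real.sqrt (c2 ^ 2 * t ^ 2 - ξ ^ 2))))) := by
  have ha : 0 < c1 * t := mul_pos (hc2.trans_le hc12) ht
  -- being the law of `R2`, `flightLaw t l2 c2` is finite, so its density is integrable
  have : IsProbabilityMeasure (flightLaw t l2 c2) :=
    hR2 ▸ Measure.isProbabilityMeasure_map hmR2.aemeasurable
  have hprob (hr : 0 < r) : ℙ {ω | rho R1 R2 Θ ω < r ∧ R1 ω = c1 * t ∧ R2 ω < c2 * t} =
      ENNReal.ofReal (exp (-(l1 * t)) * ∫ y in Ioo 0 (c2 * t),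
        fac t l2 c2 y * (arccos ((y ^ 2 + (c1 * t) ^ 2 - r ^ 2) / (2 * (c1 * t) * y)) / π)) := by
    rw [ENNReal.ofReal_mul (exp_pos _).le, ofReal_setIntegral_fac_mul_arccos hl2.le hc2.le
        (by fun_prop), ← flightLaw_prod_prod_apply hl2.le hc2.le ha hr, ← hR1, ← hR2, ← hΘ,
      ← hind.map_prodMk_eq_prod_map hmR1 hmR2 hmΘ,
      Measure.map_apply (hmR1.prodMk (hmR2.prodMk hmΘ)) (by measurability)]
    rfl
  refine ⟨fun hr hrc => ?_, fun hrc hrc' => ?_⟩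
  · rw [hprob hr, setIntegral_eq_zero_of_forall_eq_zero fun y hy => ?_, mul_zero,
      ENNReal.ofReal_zero]
    rw [arccos_lawOfCosines_eq_zero hr.le hy.1 (by nlinarith [hy.2]), zero_div, mul_zero]
  · have hr : 0 < r := (mul_nonneg (sub_nonneg.2 hc12) ht.le).trans_lt hrc
    rw [hprob hr, setIntegral_fac_mul_arccos_eq hc2.ne' hr.le (by linarith) (by nlinarith),
      add_mul, neg_add, exp_add]
    congr 1
    ring

theorem joint_prob_second_switched_small_r {Ω : Type*} [MeasureSpace Ω] [IsProbabilityMeasure (ℙ : Measure Ω)]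
    (t l1 l2 c1 c2 : ℝ) (ht : 0 < t) (hl1 : 0 < l1) (hl2 : 0 < l2)
    (hc2 : 0 < c2) (hc12 : c2 ≤ c1)
    (R1 R2 Θ : Ω → ℝ) (hmR1 : Measurable R1) (hmR2 : Measurable R2) (hmΘ : Measurable Θ)
    (hind : iIndepFun ![R1, R2, Θ] ℙ)
    (hR1 : Measure.map R1 ℙ = flightLaw t l1 c1)
    (hR2 : Measure.map R2 ℙ = flightLaw t l2 c2)
    (hΘ : Measure.map Θ ℙ = uniformMeasure (Set.Ioo 0 Real.pi))
    (r : ℝ) :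
    (0 < r → r ≤ (c1 - c2) * t →
      ℙ {ω | rho R1 R2 Θ ω < r ∧ R1 ω = c1 * t ∧ R2 ω < c2 * t} = 0) ∧
    ((c1 - c2) * t < r → r ≤ c1 * t →
      ℙ {ω | rho R1 R2 Θ ω < r ∧ R1 ω = c1 * t ∧ R2 ω < c2 * t}
        = ENNReal.ofReal (l2 * Real.exp (-((l1 + l2) * t)) / (Real.pi * c2) *
            (∫ ξ in (c1 * t - r)..(c2 * t),
              Real.arccos ((ξ ^ 2 + (c1 * t) ^ 2 - r ^ 2) / (2 * (c1 * t) * ξ)) *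
                (ξ / Real.sqrt (c2 ^ 2 * t ^ 2 - ξ ^ 2)) *
                Real.exp ((l2 / c2) * Real.sqrt (c2 ^ 2 * t ^ 2 - ξ ^ 2))))) :=
  joint_prob_second_switched_small_r_general t l1 l2 c1 c2 ht hl2 hc2 hc12 R1 R2 Θ hmR1 hmR2 hmΘ
    hind hR1 hR2 hΘ r
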